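/- Given a mixed graph G without directed cycles, a proper type-endpoint preorder p, and any coloring c of G that corresponds to p, the coloring c violates no arc of G: for every arc (u,v) of G, c(u) < c(v). Conversely, every proper coloring of G corresponds to at least one proper type-endpoint preorder. -/

import Mathlib

structure MixedGraph (V : Type) where
  Edge : V → V → Prop
  Arc : V → V → Prop
  edge_symm : ∀ u v, Edge u v → Edge v u
  edge_irrefl : ∀ v, ¬ Edge v v
  arc_irrefl : ∀ v, ¬ Arc v v
  not_edge_arc : ∀ u v, Arc u v → ¬ Edge u v

namespace MixedGraph

variable {V : Type}

/-- No directed cycles: the arc relation has no nontrivial closed walks. -/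
def Acyclic (G : MixedGraph V) : Prop := ∀ v, ¬ Relation.TransGen G.Arc v v

def Nminus (G : MixedGraph V) (v : V) : Set V := {u | G.Arc u v}
def Nplus (G : MixedGraph V) (v : V) : Set V := {u | G.Arc v u}
def Nu (G : MixedGraph V) (v : V) : Set V := {u | G.Edge u v}

/-- Two vertices have the same mixed neighborhood type. -/
def SameType (G : MixedGraph V) (u v : V) : Prop :=
  G.Nminus u = G.Nminus v ∧ G.Nplus u = G.Nplus v ∧ G.Nu u \ {v} = G.Nu v \ {u}

/-- Mixed neighborhood diversity: the number of mixed types. -/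
noncomputable def ndm (G : MixedGraph V) : ℕ := Nat.card (Quot G.SameType)

/-- The underlying undirected graph: arcs become edges. -/
def underlying (G : MixedGraph V) : SimpleGraph V where
  Adj u v := G.Edge u v ∨ G.Arc u v ∨ G.Arc v u
  symm := by
    constructor
    intro u v h
    rcases h with h | h | h
    · exact Or.inl (G.edge_symm u v h)
    · exact Or.inr (Or.inr h)
    · exact Or.inr (Or.inl h)
  loopless := by
    constructor
    intro v h
    rcases h with h | h | h
    · exact G.edge_irrefl v h
    · exact G.arc_irrefl v h
    · exact G.arc_irrefl v h

/-- Same type in the underlying undirected graph. -/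
def USameType (G : MixedGraph V) (u v : V) : Prop :=
  G.underlying.neighborSet u \ {v} = G.underlying.neighborSet v \ {u}

/-- Neighborhood diversity of the underlying undirected graph. -/
noncomputable def ndu (G : MixedGraph V) : ℕ := Nat.card (Quot G.USameType)

/-- A proper coloring: distinct colors across edges, increasing along arcs. -/
def ProperColoring (G : MixedGraph V) (c : V → ℕ) : Prop :=
  (∀ u v, G.Edge u v → c u ≠ c v) ∧ (∀ u v, G.Arc u v → c u < c v)

/-- Chromatic number: least `k` admitting a proper coloring with colors `0,…,k-1`. -/
noncomputable def chi (G : MixedGraph V) : ℕ :=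
  sInf {k | ∃ c : V → ℕ, G.ProperColoring c ∧ ∀ v, c v < k}

/-- Maxrank: the length of a longest directed path. -/
noncomputable def Lambda (G : MixedGraph V) : ℕ :=
  sSup {ℓ | ∃ p : ℕ → V, ∀ i < ℓ, G.Arc (p i) (p (i + 1))}

/-- Inrank of a vertex: the length of a longest directed path ending in it. -/
noncomputable def inrank (G : MixedGraph V) (v : V) : ℕ :=
  sSup {ℓ | ∃ p : ℕ → V, p ℓ = v ∧ ∀ i < ℓ, G.Arc (p i) (p (i + 1))}

/-- A vertex cover of the underlying undirected graph (covers edges and arcs). -/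
def IsVertexCover (G : MixedGraph V) (C : Finset V) : Prop :=
  ∀ u v, G.Edge u v ∨ G.Arc u v → u ∈ C ∨ v ∈ C

/-- Vertex cover number. -/
noncomputable def vc (G : MixedGraph V) : ℕ :=
  sInf {n | ∃ C : Finset V, C.card = n ∧ G.IsVertexCover C}

/-- Transitive closure of a mixed graph without directed cycles: all transitive
arcs are added, and edges parallel to arcs are removed. -/
def tc (G : MixedGraph V) (hG : G.Acyclic) : MixedGraph V where
  Edge u v := G.Edge u v ∧ ¬ Relation.TransGen G.Arc u v ∧ ¬ Relation.TransGen G.Arc v u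
  Arc u v := Relation.TransGen G.Arc u v
  edge_symm := fun u v h => ⟨G.edge_symm u v h.1, h.2.2, h.2.1⟩
  edge_irrefl := fun v h => G.edge_irrefl v h.1
  arc_irrefl := hG
  not_edge_arc := fun u v h hE => hE.2.1 h

/-- Induced mixed subgraph. -/
def induce (G : MixedGraph V) (S : Set V) : MixedGraph S where
  Edge u v := G.Edge u.1 v.1
  Arc u v := G.Arc u.1 v.1
  edge_symm := fun u v h => G.edge_symm u.1 v.1 h
  edge_irrefl := fun v => G.edge_irrefl v.1
  arc_irrefl := fun v => G.arc_irrefl v.1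
  not_edge_arc := fun u v => G.not_edge_arc u.1 v.1

/-- `I` is an independent set of the subgraph induced by `S`. -/
def IndepIn (G : MixedGraph V) (S I : Set V) : Prop :=
  I ⊆ S ∧ ∀ u ∈ I, ∀ v ∈ I, ¬ G.Edge u v ∧ ¬ G.Arc u v

/-- `I` is a maximal independent set of the subgraph induced by `S`. -/
def MaximalIndepIn (G : MixedGraph V) (S I : Set V) : Prop :=
  G.IndepIn S I ∧ ∀ J, G.IndepIn S J → I ⊆ J → J = I

/-- Clique number of the underlying undirected graph. -/
noncomputable def cliqueNum (G : MixedGraph V) : ℕ :=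
  sSup {n | ∃ s : Finset V, G.underlying.IsNClique n s}

end MixedGraph

namespace MixedGraph

variable {V : Type}

/-- A type-endpoint preorder: each vertex gets two endpoints, which are constant
on mixed neighborhood types and satisfy `pm v < pp v`. -/
def IsTypeEndpointPreorder (G : MixedGraph V) (pm pp : V → ℕ) : Prop :=
  (∀ v, pm v < pp v) ∧ ∀ u v, G.SameType u v → pm u = pm v ∧ pp u = pp v

/-- A proper type-endpoint preorder: for every arc, the upper endpoint of the
source type is at most the lower endpoint of the target type. -/
def ProperPreorder (G : MixedGraph V) (pm pp : V → ℕ) : Prop :=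
  ∀ u v, G.Arc u v → pp u ≤ pm v

/-- A coloring corresponds to a type-endpoint preorder: there is an ascending
sequence of colors such that each vertex's color lies in the half-open interval
determined by its type endpoints. -/
def Corresponds (G : MixedGraph V) (c : V → ℕ) (pm pp : V → ℕ) : Prop :=
  ∃ seq : ℕ → ℕ, StrictMono seq ∧ ∀ v, seq (pm v) ≤ c v ∧ c v < seq (pp v)

end MixedGraph

/-! For the converse, group the vertices by their in- and out-neighbourhoods, a partition coarser
than the mixed types. If some vertex of one group has an arc to some vertex of another, then every
vertex of the first has an arc to every vertex of the second, so all colours used on the first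
group lie below all colours used on the second. Hence the endpoints "least colour" and
"largest colour + 1" of the groups, read through the identity sequence, form a proper
type-endpoint preorder to which the colouring corresponds. -/

namespace MixedGraph

variable {V : Type} (G : MixedGraph V)

theorem arc_lt_of_corresponds {pm pp c : V → ℕ} (hp : G.ProperPreorder pm pp)
    (hc : G.Corresponds c pm pp) {u v : V} (huv : G.Arc u v) : c u < c v := by
  obtain ⟨seq, hseq, hcol⟩ := hc
  calc c u < seq (pp u) := (hcol u).2
    _ ≤ seq (pm v) := hseq.monotone (hp u v huv)
    _ ≤ c v := (hcol v).1

def SameArcNbhd (u v : V) : Prop :=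
  G.Nminus u = G.Nminus v ∧ G.Nplus u = G.Nplus v

variable {G}

theorem SameArcNbhd.symm {u v : V} (h : G.SameArcNbhd u v) : G.SameArcNbhd v u :=
  ⟨h.1.symm, h.2.symm⟩

theorem SameArcNbhd.trans {u v w : V} (h : G.SameArcNbhd u v) (h' : G.SameArcNbhd v w) :
    G.SameArcNbhd u w :=
  ⟨h.1.trans h'.1, h.2.trans h'.2⟩

theorem SameType.sameArcNbhd {u v : V} (h : G.SameType u v) : G.SameArcNbhd u v :=
  ⟨h.1, h.2.1⟩

theorem Arc.of_sameArcNbhd {u u' v v' : V} (huv : G.Arc u v) (hu : G.SameArcNbhd u' u)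
    (hv : G.SameArcNbhd v' v) : G.Arc u' v' := by
  have hu'v : G.Arc u' v := show v ∈ G.Nplus u' by rw [hu.2]; exact huv
  show u' ∈ G.Nminus v'
  rw [hv.1]
  exact hu'v

section ArcNbhdColors

variable (G) [Fintype V] (c : V → ℕ)

open Classical in
noncomputable def arcNbhdColors (v : V) : Finset ℕ :=
  (Finset.univ.filter (G.SameArcNbhd · v)).image c

variable {G c}

theorem mem_arcNbhdColors {v : V} {a : ℕ} :
    a ∈ G.arcNbhdColors c v ↔ ∃ w, G.SameArcNbhd w v ∧ c w = a := by
  simp [arcNbhdColors]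

theorem self_mem_arcNbhdColors (v : V) : c v ∈ G.arcNbhdColors c v :=
  mem_arcNbhdColors.2 ⟨v, ⟨rfl, rfl⟩, rfl⟩

theorem arcNbhdColors_nonempty (v : V) : (G.arcNbhdColors c v).Nonempty :=
  ⟨c v, self_mem_arcNbhdColors v⟩

theorem SameArcNbhd.arcNbhdColors_eq {u v : V} (h : G.SameArcNbhd u v) :
    G.arcNbhdColors c u = G.arcNbhdColors c v := by
  ext a
  simp only [mem_arcNbhdColors]
  exact exists_congr fun w => and_congr_left fun _ => ⟨(·.trans h), (·.trans h.symm)⟩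

theorem lt_of_mem_arcNbhdColors (hc : ∀ u v, G.Arc u v → c u < c v) {u v : V} (huv : G.Arc u v)
    {a b : ℕ} (ha : a ∈ G.arcNbhdColors c u) (hb : b ∈ G.arcNbhdColors c v) : a < b := by
  obtain ⟨u', hu', rfl⟩ := mem_arcNbhdColors.1 ha
  obtain ⟨v', hv', rfl⟩ := mem_arcNbhdColors.1 hb
  exact hc u' v' (huv.of_sameArcNbhd hu' hv')

variable (G c)

noncomputable def arcNbhdLo (v : V) : ℕ := (G.arcNbhdColors c v).min' (arcNbhdColors_nonempty v)

noncomputable def arcNbhdHi (v : V) : ℕ :=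
  (G.arcNbhdColors c v).max' (arcNbhdColors_nonempty v) + 1

theorem arcNbhdLo_le (v : V) : G.arcNbhdLo c v ≤ c v :=
  Finset.min'_le _ _ (self_mem_arcNbhdColors v)

theorem lt_arcNbhdHi (v : V) : c v < G.arcNbhdHi c v :=
  Nat.lt_succ_of_le (Finset.le_max' _ _ (self_mem_arcNbhdColors v))

theorem isTypeEndpointPreorder_arcNbhd :
    G.IsTypeEndpointPreorder (G.arcNbhdLo c) (G.arcNbhdHi c) := by
  refine ⟨fun v => (G.arcNbhdLo_le c v).trans_lt (G.lt_arcNbhdHi c v), fun u v h => ?_⟩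
  have hcol := h.sameArcNbhd.arcNbhdColors_eq (c := c)
  simp [arcNbhdLo, arcNbhdHi, hcol]

theorem properPreorder_arcNbhd (hc : ∀ u v, G.Arc u v → c u < c v) :
    G.ProperPreorder (G.arcNbhdLo c) (G.arcNbhdHi c) := fun _ _ huv =>
  lt_of_mem_arcNbhdColors hc huv (Finset.max'_mem _ _) (Finset.min'_mem _ _)

theorem corresponds_arcNbhd : G.Corresponds c (G.arcNbhdLo c) (G.arcNbhdHi c) :=
  ⟨id, strictMono_id, fun v => ⟨G.arcNbhdLo_le c v, G.lt_arcNbhdHi c v⟩⟩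

end ArcNbhdColors

end MixedGraph

theorem stmt19_general {V : Type} [Fintype V] (G : MixedGraph V) :
    (∀ (pm pp : V → ℕ) (c : V → ℕ), G.IsTypeEndpointPreorder pm pp → G.ProperPreorder pm pp →
      G.Corresponds c pm pp → ∀ u v, G.Arc u v → c u < c v) ∧
    (∀ c : V → ℕ, G.ProperColoring c →
      ∃ pm pp : V → ℕ, G.IsTypeEndpointPreorder pm pp ∧ G.ProperPreorder pm pp ∧
        G.Corresponds c pm pp) :=
  ⟨fun _ _ _ _ hp hc _ _ huv => G.arc_lt_of_corresponds hp hc huv,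
    fun c hc => ⟨_, _, G.isTypeEndpointPreorder_arcNbhd c, G.properPreorder_arcNbhd c hc.2,
      G.corresponds_arcNbhd c⟩⟩

theorem stmt19 {V : Type} [Fintype V] [Nonempty V] (G : MixedGraph V) (hG : G.Acyclic) :
    (∀ (pm pp : V → ℕ) (c : V → ℕ), G.IsTypeEndpointPreorder pm pp → G.ProperPreorder pm pp →
      G.Corresponds c pm pp → ∀ u v, G.Arc u v → c u < c v) ∧
    (∀ c : V → ℕ, G.ProperColoring c →
      ∃ pm pp : V → ℕ, G.IsTypeEndpointPreorder pm pp ∧ G.ProperPreorder pm pp ∧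
        G.Corresponds c pm pp) :=
  stmt19_general G
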